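/- Let N, l, m be positive integers with l ≤ N − 1, N ≠ 2l and 1 ≤ m ≤ N, and set K₀ = √N·(√(2e) + √(2e + 4))/4. Then E[exp((Ũ_l(m,N))²/K₀²)] ≤ 2; consequently the sub-Gaussian norm of Ũ_l(m,N), defined as inf{K > 0 : E[exp((Ũ_l(m,N))²/K²)] ≤ 2}, is at most √N·(√(2e) + √(2e + 4))/4. -/

import Mathlib

/-!
Since `N ∤ l`, the coefficients `cₙ = cos (2πnl/N)` sum to zero, so `Ũ = ∑ cₙ (Bₙ - E Bₙ)` is
a sum of independent centred variables, the `n`-th one confined to an interval of length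
`|cₙ| ≤ 1`. Hoeffding's lemma makes `Ũ` sub-Gaussian with variance proxy `N / 4`. Writing
`exp (y² / 2)` as the moment generating function of a standard Gaussian at `y` and exchanging
the order of integration turns this into `E[exp (Ũ² / K²)] ≤ (1 - N / (2 K²))^(-1/2)`, which is
at most `2` as soon as `K² ≥ N`; this holds for `K₀` because `√(2e) + √(2e + 4) ≥ 4`.
-/

open MeasureTheory ProbabilityTheory Finset
open scoped NNReal ENNReal

lemma Finset.sum_Icc_one_eq_sum_fin {M : Type*} [AddCommMonoid M] (N : ℕ) (f : ℕ → M) :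
    ∑ n ∈ Icc 1 N, f n = ∑ i : Fin N, f (i + 1) := by
  rw [Fin.sum_univ_eq_sum_range (fun i ↦ f (i + 1)), ← Finset.Ico_add_one_right_eq_Icc,
    sum_Ico_eq_sum_range]
  simp [add_comm]

lemma sum_Icc_pow_eq_zero {K : Type*} [DivisionRing K] {z : K} {N : ℕ} (hzN : z ^ N = 1)
    (hz : z ≠ 1) : ∑ n ∈ Icc 1 N, z ^ n = 0 := by
  rw [Finset.sum_Icc_one_eq_sum_fin, Fin.sum_univ_eq_sum_range (fun i ↦ z ^ (i + 1))]
  simp_rw [pow_succ, ← sum_mul, geom_sum_eq hz, hzN, sub_self, zero_div, zero_mul]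

lemma sum_Icc_cos_two_pi_mul_div_eq_zero {N k : ℕ} (hk : ¬ N ∣ k) :
    ∑ n ∈ Icc 1 N, Real.cos (2 * Real.pi * n * k / N) = 0 := by
  obtain rfl | hN := eq_or_ne N 0
  · simp
  have hζ := Complex.isPrimitiveRoot_exp N hN
  set z := Complex.exp (2 * Real.pi * Complex.I / N) ^ k
  have hre (n : ℕ) : (z ^ n).re = Real.cos (2 * Real.pi * n * k / N) := by
    rw [← pow_mul, ← Complex.exp_nat_mul, ← Complex.exp_ofReal_mul_I_re]
    congr 2
    push_cast
    ring
  have hzN : z ^ N = 1 := by rw [pow_right_comm, hζ.pow_eq_one, one_pow]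
  have hz : z ≠ 1 := fun h ↦ hk (hζ.pow_eq_one_iff_dvd k |>.mp h)
  simpa [hre] using congrArg Complex.re (sum_Icc_pow_eq_zero hzN hz)

lemma exp_sq_div_two_eq_integral_gaussianReal (y : ℝ) :
    Real.exp (y ^ 2 / 2) = ∫ x, Real.exp (y * x) ∂gaussianReal 0 1 := by
  have := congrFun (mgf_fun_id_gaussianReal (μ := 0) (v := 1)) y
  simp only [mgf, zero_mul, NNReal.coe_one, one_mul, zero_add] at this
  exact this.symm

lemma lintegral_exp_mul_sq_gaussianReal {s : ℝ} (hs : s < 1 / 2) :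
    ∫⁻ x, ENNReal.ofReal (Real.exp (s * x ^ 2)) ∂gaussianReal 0 1
      = ENNReal.ofReal (Real.sqrt (1 - 2 * s))⁻¹ := by
  have hb : 0 < 1 / 2 - s := by linarith
  have hdens (x : ℝ) : gaussianPDF 0 1 x * ENNReal.ofReal (Real.exp (s * x ^ 2))
      = ENNReal.ofReal ((Real.sqrt (2 * Real.pi))⁻¹ * Real.exp (-(1 / 2 - s) * x ^ 2)) := by
    rw [gaussianPDF, ← ENNReal.ofReal_mul (gaussianPDFReal_nonneg _ _ _), gaussianPDFReal,
      NNReal.coe_one, mul_one, mul_assoc, ← Real.exp_add]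
    congr 3
    ring
  rw [gaussianReal_of_var_ne_zero _ one_ne_zero,
    lintegral_withDensity_eq_lintegral_mul _ (measurable_gaussianPDF _ _) (by fun_prop)]
  simp only [Pi.mul_apply, hdens]
  rw [← ofReal_integral_eq_lintegral_ofReal ((integrable_exp_neg_mul_sq hb).const_mul _)
    (ae_of_all _ fun x ↦ by positivity), integral_const_mul, integral_gaussian]
  congr 1
  rw [show Real.pi / (1 / 2 - s) = 2 * Real.pi / (1 - 2 * s) by field_simp,
    Real.sqrt_div' _ (by linarith : (0:ℝ) ≤ 1 - 2 * s)]
  field_simp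

namespace ProbabilityTheory.HasSubgaussianMGF

variable {Ω : Type*} [MeasurableSpace Ω] {μ : Measure Ω} {X : Ω → ℝ} {c : ℝ≥0}

lemma mono (h : HasSubgaussianMGF X c μ) {c' : ℝ≥0} (hc : c ≤ c') :
    HasSubgaussianMGF X c' μ where
  integrable_exp_mul := h.integrable_exp_mul
  mgf_le t := (h.mgf_le t).trans <| Real.exp_le_exp.mpr <| by gcongr

variable [SFinite μ]

lemma lintegral_exp_sq_div_le (h : HasSubgaussianMGF X c μ) {K : ℝ} (hK : 2 * c < K ^ 2) :
    ∫⁻ ω, ENNReal.ofReal (Real.exp (X ω ^ 2 / K ^ 2)) ∂μ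
      ≤ ENNReal.ofReal (Real.sqrt (1 - 2 * (c / K ^ 2)))⁻¹ := by
  have hK0 : K ≠ 0 := by rintro rfl; linarith [c.2]
  set a := Real.sqrt 2 / K
  have ha : a ^ 2 = 2 / K ^ 2 := by rw [div_pow, Real.sq_sqrt zero_le_two]
  have hgauss (ω : Ω) : ENNReal.ofReal (Real.exp (X ω ^ 2 / K ^ 2))
      = ∫⁻ x, ENNReal.ofReal (Real.exp (a * x * X ω)) ∂gaussianReal 0 1 := by
    simp_rw [mul_right_comm a _ (X ω)]
    rw [← ofReal_integral_eq_lintegral_ofReal (integrable_exp_mul_gaussianReal _)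
      (ae_of_all _ fun x ↦ (Real.exp_pos _).le), ← exp_sq_div_two_eq_integral_gaussianReal,
      mul_pow, ha]
    ring_nf
  have hmgf (x : ℝ) : ∫⁻ ω, ENNReal.ofReal (Real.exp (a * x * X ω)) ∂μ
      ≤ ENNReal.ofReal (Real.exp (c / K ^ 2 * x ^ 2)) := by
    rw [← ofReal_integral_eq_lintegral_ofReal (h.integrable_exp_mul _)
      (ae_of_all _ fun ω ↦ (Real.exp_pos _).le)]
    refine ENNReal.ofReal_le_ofReal ((h.mgf_le (a * x)).trans_eq ?_)
    rw [mul_pow, ha]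
    ring_nf
  have hmeas : AEMeasurable (fun p : Ω × ℝ ↦ ENNReal.ofReal (Real.exp (a * p.2 * X p.1)))
      (μ.prod (gaussianReal 0 1)) :=
    (by fun_prop : Measurable fun q : ℝ × ℝ ↦ ENNReal.ofReal (Real.exp (a * q.1 * q.2)))
      |>.comp_aemeasurable (measurable_snd.aemeasurable.prodMk h.aemeasurable.comp_fst)
  calc ∫⁻ ω, ENNReal.ofReal (Real.exp (X ω ^ 2 / K ^ 2)) ∂μ
      = ∫⁻ ω, ∫⁻ x, ENNReal.ofReal (Real.exp (a * x * X ω)) ∂gaussianReal 0 1 ∂μ :=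
        lintegral_congr hgauss
    _ = ∫⁻ x, ∫⁻ ω, ENNReal.ofReal (Real.exp (a * x * X ω)) ∂μ ∂gaussianReal 0 1 :=
        lintegral_lintegral_swap hmeas
    _ ≤ ∫⁻ x, ENNReal.ofReal (Real.exp (c / K ^ 2 * x ^ 2)) ∂gaussianReal 0 1 :=
        lintegral_mono hmgf
    _ = _ := lintegral_exp_mul_sq_gaussianReal (by
        rw [div_lt_iff₀ (by positivity)]; linarith)

lemma integral_exp_sq_div_le_two (h : HasSubgaussianMGF X c μ) {K : ℝ} (hK0 : K ≠ 0)
    (hK : 8 * c ≤ 3 * K ^ 2) :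
    ∫ ω, Real.exp (X ω ^ 2 / K ^ 2) ∂μ ≤ 2 := by
  have hK2 : 0 < K ^ 2 := by positivity
  have hcK : c / K ^ 2 ≤ 3 / 8 := by rw [div_le_iff₀ hK2]; linarith
  have hsqrt : 1 / 2 ≤ Real.sqrt (1 - 2 * (c / K ^ 2)) :=
    Real.le_sqrt_of_sq_le (by linarith)
  rw [integral_eq_lintegral_of_nonneg_ae (ae_of_all _ fun ω ↦ (Real.exp_pos _).le)
    (by have := h.aemeasurable; fun_prop)]
  refine ENNReal.toReal_le_of_le_ofReal zero_le_two <|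
    (h.lintegral_exp_sq_div_le (by linarith [c.2])).trans (ENNReal.ofReal_le_ofReal ?_)
  rw [inv_le_comm₀ (by linarith) two_pos]
  linarith

end ProbabilityTheory.HasSubgaussianMGF

section

variable {Ω : Type*} [MeasurableSpace Ω] {P : Measure Ω}

lemma ae_eq_zero_or_eq_one [IsProbabilityMeasure P] {B : Ω → ℝ} (hB : Measurable B)
    (h : P {ω | B ω = 0} = 1 - P {ω | B ω = 1}) : ∀ᵐ ω ∂P, B ω = 0 ∨ B ω = 1 := by
  have h0 : MeasurableSet {ω | B ω = 0} := hB (measurableSet_singleton 0)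
  have h1 : MeasurableSet {ω | B ω = 1} := hB (measurableSet_singleton 1)
  have hdisj : Disjoint {ω | B ω = 0} {ω | B ω = 1} :=
    Set.disjoint_left.mpr fun ω h0 h1 ↦ by simp_all
  have hunion : P ({ω | B ω = 0} ∪ {ω | B ω = 1}) = 1 := by
    rw [measure_union hdisj h1, h, tsub_add_cancel_of_le prob_le_one]
  rw [← prob_compl_eq_zero_iff (h0.union h1)] at hunion
  exact measure_eq_zero_iff_ae_notMem.mp hunion |>.mono fun ω hω ↦ by
    simpa [or_iff_not_imp_left] using hω

lemma integral_eq_measureReal_of_ae_eq_zero_or_eq_one {B : Ω → ℝ} (hB : Measurable B)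
    (h01 : ∀ᵐ ω ∂P, B ω = 0 ∨ B ω = 1) : P[B] = P.real {ω | B ω = 1} := by
  have h1 : MeasurableSet {ω | B ω = 1} := hB (measurableSet_singleton 1)
  rw [← integral_indicator_one h1]
  refine integral_congr_ae (h01.mono fun ω hω ↦ ?_)
  rcases hω with hω | hω <;> simp [hω, Set.indicator]

variable [IsProbabilityMeasure P] {ι : Type*} {Y : ι → Ω → ℝ}

lemma hasSubgaussianMGF_sum_mul_sub_integral (hindep : iIndepFun Y P)
    (hY : ∀ i, AEMeasurable (Y i) P) (hY01 : ∀ i, ∀ᵐ ω ∂P, Y i ω ∈ Set.Icc 0 1)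
    (s : Finset ι) (c : ι → ℝ) :
    HasSubgaussianMGF (fun ω ↦ ∑ i ∈ s, c i * (Y i ω - P[Y i]))
      (∑ i ∈ s, ‖c i‖₊ ^ 2 / 4) P := by
  have hindep' : iIndepFun (fun i ω ↦ c i * (Y i ω - P[Y i])) P :=
    hindep.comp (g := fun i (x : ℝ) ↦ c i * (x - ∫ ω, Y i ω ∂P)) fun i ↦ by fun_prop
  refine HasSubgaussianMGF.sum_of_iIndepFun hindep' fun i _ ↦ ?_
  convert (hasSubgaussianMGF_of_mem_Icc (hY i) (hY01 i)).const_mul (c i) using 1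
  refine NNReal.eq ?_
  -- `const_mul` writes its parameter `c i ^ 2` as a bare subtype element, invisible to `simp`
  erw [NNReal.coe_mul]
  norm_num
  exact div_eq_mul_one_div _ _

lemma hasSubgaussianMGF_sum_mul_of_sum_eq_zero (hindep : iIndepFun Y P)
    (hY : ∀ i, AEMeasurable (Y i) P) (hY01 : ∀ i, ∀ᵐ ω ∂P, Y i ω ∈ Set.Icc 0 1)
    {s : Finset ι} {p : ℝ} (hp : ∀ i ∈ s, P[Y i] = p) {c : ι → ℝ} (hc : ∑ i ∈ s, c i = 0)
    (hc1 : ∀ i ∈ s, |c i| ≤ 1) :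
    HasSubgaussianMGF (fun ω ↦ ∑ i ∈ s, c i * Y i ω) (#s / 4) P := by
  have hcentre :
      (fun ω ↦ ∑ i ∈ s, c i * (Y i ω - P[Y i])) = fun ω ↦ ∑ i ∈ s, c i * Y i ω := by
    ext ω
    rw [sum_congr rfl fun i hi ↦ by rw [hp i hi]]
    simp only [mul_sub, sum_sub_distrib, ← sum_mul, hc, zero_mul, sub_zero]
  rw [← hcentre]
  refine (hasSubgaussianMGF_sum_mul_sub_integral hindep hY hY01 s c).mono ?_
  calc ∑ i ∈ s, ‖c i‖₊ ^ 2 / 4 ≤ ∑ _i ∈ s, (1 : ℝ≥0) / 4 :=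
        sum_le_sum fun i hi ↦ by
          gcongr
          exact pow_le_one₀ zero_le (by simpa [← NNReal.coe_le_coe] using hc1 i hi)
    _ = #s / 4 := by simp [div_eq_mul_inv]

end

lemma four_le_sqrt_two_mul_exp_one_add_sqrt :
    4 ≤ Real.sqrt (2 * Real.exp 1) + Real.sqrt (2 * Real.exp 1 + 4) := by
  have he : 2 ≤ Real.exp 1 := by linarith [Real.add_one_le_exp 1]
  linarith [Real.le_sqrt_of_sq_le (show (2 : ℝ) ^ 2 ≤ 2 * Real.exp 1 by linarith),
    Real.le_sqrt_of_sq_le (show (2 : ℝ) ^ 2 ≤ 2 * Real.exp 1 + 4 by linarith)]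

lemma le_sq_sqrt_mul_div_four {x Q : ℝ} (hx : 0 ≤ x) (hQ : 4 ≤ Q) :
    x ≤ (Real.sqrt x * Q / 4) ^ 2 := by
  have hQ2 : (4 : ℝ) ^ 2 ≤ Q ^ 2 := pow_le_pow_left₀ (by norm_num) hQ 2
  rw [div_pow, mul_pow, Real.sq_sqrt hx, le_div_iff₀ (by norm_num)]
  nlinarith

theorem stmt_11_general
    {Ω : Type*} [MeasurableSpace Ω] (P : Measure Ω) [IsProbabilityMeasure P]
    (N l m : ℕ) (hl : 0 < l) (hlN : l ≤ N - 1)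
    (B : ℕ → Ω → ℝ) (hBmeas : ∀ n, Measurable (B n))
    (hBindep : iIndepFun (fun i : Fin N => B (i.1 + 1)) P)
    (hB1 : ∀ n ∈ Finset.Icc 1 N, P {ω | B n ω = 1} = (m : ENNReal) / N)
    (hB0 : ∀ n ∈ Finset.Icc 1 N, P {ω | B n ω = 0} = 1 - (m : ENNReal) / N)
    (U : Ω → ℝ)
    (hU : U = fun ω => ∑ n ∈ Finset.Icc 1 N, Real.cos (2 * Real.pi * n * l / N) * B n ω) :
    (∫ ω, Real.exp ((U ω) ^ 2 / (Real.sqrt N * (Real.sqrt (2 * Real.exp 1) + Real.sqrt (2 * Real.exp 1 + 4)) / 4) ^ 2) ∂P) ≤ 2 ∧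
    sInf {K : ℝ | 0 < K ∧ (∫ ω, Real.exp ((U ω) ^ 2 / K ^ 2) ∂P) ≤ 2}
      ≤ Real.sqrt N * (Real.sqrt (2 * Real.exp 1) + Real.sqrt (2 * Real.exp 1 + 4)) / 4 := by
  have hmem (i : Fin N) : (i : ℕ) + 1 ∈ Icc 1 N := mem_Icc.mpr ⟨by omega, by omega⟩
  have h01 (n : ℕ) (hn : n ∈ Icc 1 N) : ∀ᵐ ω ∂P, B n ω = 0 ∨ B n ω = 1 :=
    ae_eq_zero_or_eq_one (hBmeas n) (by rw [hB0 n hn, hB1 n hn])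
  have hmean (i : Fin N) : P[B (i + 1)] = ((m : ℝ≥0∞) / N).toReal := by
    rw [integral_eq_measureReal_of_ae_eq_zero_or_eq_one (hBmeas _) (h01 _ (hmem i)),
      measureReal_def, hB1 _ (hmem i)]
  have hc : ∑ i : Fin N, Real.cos (2 * Real.pi * (i + 1 : ℕ) * l / N) = 0 := by
    rw [← sum_Icc_one_eq_sum_fin N fun n ↦ Real.cos (2 * Real.pi * n * l / N)]
    exact sum_Icc_cos_two_pi_mul_div_eq_zero (Nat.not_dvd_of_pos_of_lt hl (by omega))
  have hUfin :
      U = fun ω ↦ ∑ i : Fin N, Real.cos (2 * Real.pi * (i + 1 : ℕ) * l / N) * B (i + 1) ω :=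
    hU ▸ funext fun ω ↦ sum_Icc_one_eq_sum_fin N _
  have hsubG : HasSubgaussianMGF U (N / 4) P := by
    rw [hUfin]
    simpa using hasSubgaussianMGF_sum_mul_of_sum_eq_zero hBindep (fun _ ↦ (hBmeas _).aemeasurable)
      (fun i ↦ (h01 _ (hmem i)).mono fun ω hω ↦ by rcases hω with hω | hω <;> simp [hω])
      (fun i _ ↦ hmean i) hc (fun _ _ ↦ Real.abs_cos_le_one _)
  set K := Real.sqrt N * (Real.sqrt (2 * Real.exp 1) + Real.sqrt (2 * Real.exp 1 + 4)) / 4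
  have hK : (N : ℝ) ≤ K ^ 2 :=
    le_sq_sqrt_mul_div_four N.cast_nonneg four_le_sqrt_two_mul_exp_one_add_sqrt
  have hKpos : 0 < K := by
    have := four_le_sqrt_two_mul_exp_one_add_sqrt
    have : 0 < Real.sqrt N := Real.sqrt_pos.mpr (by exact_mod_cast (show 0 < N by omega))
    positivity
  have hint := hsubG.integral_exp_sq_div_le_two hKpos.ne' (by push_cast; linarith)
  exact ⟨hint, csInf_le ⟨0, fun _ hK ↦ hK.1.le⟩ ⟨hKpos, hint⟩⟩

theorem stmt_11
    {Ω : Type*} [MeasurableSpace Ω] (P : Measure Ω) [IsProbabilityMeasure P]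
    (N l m : ℕ) (hN : 0 < N) (hl : 0 < l) (hlN : l ≤ N - 1) (hNl : N ≠ 2 * l) (hm : 1 ≤ m)
    (hmN : m ≤ N)
    (B : ℕ → Ω → ℝ) (hBmeas : ∀ n, Measurable (B n))
    (hBindep : iIndepFun (fun i : Fin N => B (i.1 + 1)) P)
    (hB1 : ∀ n ∈ Finset.Icc 1 N, P {ω | B n ω = 1} = (m : ENNReal) / N)
    (hB0 : ∀ n ∈ Finset.Icc 1 N, P {ω | B n ω = 0} = 1 - (m : ENNReal) / N)
    (U : Ω → ℝ)
    (hU : U = fun ω => ∑ n ∈ Finset.Icc 1 N, Real.cos (2 * Real.pi * n * l / N) * B n ω) :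
    (∫ ω, Real.exp ((U ω) ^ 2 / (Real.sqrt N * (Real.sqrt (2 * Real.exp 1) + Real.sqrt (2 * Real.exp 1 + 4)) / 4) ^ 2) ∂P) ≤ 2 ∧
    sInf {K : ℝ | 0 < K ∧ (∫ ω, Real.exp ((U ω) ^ 2 / K ^ 2) ∂P) ≤ 2}
      ≤ Real.sqrt N * (Real.sqrt (2 * Real.exp 1) + Real.sqrt (2 * Real.exp 1 + 4)) / 4 :=
  stmt_11_general P N l m hl hlN B hBmeas hBindep hB1 hB0 U hU
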